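/- arXiv:2109.10130 — 4 statements merged into one kernel-verified Lean document; each statement's English description precedes it below -/
import Mathlib

section
/- Let K be a field, let n ≥ 1 be a natural number and let g ∈ K. Then the binomial x^n − g is irreducible over K if and only if both of the following hold: (1) for every prime p dividing n, g is not a p-th power in K (i.e. g ∉ K^p), and (2) if 4 divides n, then g is not of the form −4h^4 for any h ∈ K (i.e. g ∉ −4K^4). -/
/-!
A `p`-th root `h` of `g` with `p ∣ n` makes `X ^ (n / p) - h` a proper factor, and for
`g = -4h⁴`, `4t = n`, Sophie Germain's identity splits `X ^ n - g` into two factors of degree `2t`.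

Conversely write `n = 2 ^ k * m` with `m` odd and use Capelli's reduction
`X_pow_mul_sub_C_irreducible`: `X ^ (d * e) - a` is irreducible once `X ^ e - a` is and, for a root
`x` of it, `X ^ d - x` is irreducible over `K(x)`. For the odd factor, the norm of `K(x)/K` turns a
`q`-th root of `x` into a `q`-th root of `±a`, and `±1` is a `q`-th power of itself. For the
`2`-power factor one adjoins square roots one at a time: if `x² = a`, then `±x` is a square in
`K(x)` only when `a ∈ -4K⁴`, which keeps both hypotheses alive up the tower.
-/

open Polynomial IntermediateField

section

variable {K : Type*} [Field K]

lemma not_irreducible_X_pow_sub_C_neg_four_mul_pow_four {n : ℕ} (hn : 4 ∣ n) (h : K) :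
    ¬ Irreducible (X ^ n - C (-4 * h ^ 4) : K[X]) := by
  obtain ⟨t, rfl⟩ := hn
  intro hirr
  have ht := hirr.natDegree_pos
  rw [natDegree_X_pow_sub_C] at ht
  let q₁ : K[X] := X ^ 2 + C (2 * h) * X + C (2 * h ^ 2)
  let q₂ : K[X] := X ^ 2 - C (2 * h) * X + C (2 * h ^ 2)
  have hfac : X ^ (4 * t) - C (-4 * h ^ 4) = q₁.comp (X ^ t) * q₂.comp (X ^ t) := by
    simp only [q₁, q₂, add_comp, sub_comp, mul_comp, pow_comp, X_comp, C_comp]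
    simp only [map_mul, map_neg, map_pow, map_ofNat]
    ring
  have hdeg : ∀ q : K[X], q.natDegree = 2 → ¬ IsUnit (q.comp (X ^ t)) := fun q hq hu => by
    have := natDegree_eq_zero_of_isUnit hu
    rw [natDegree_comp, hq, natDegree_X_pow] at this
    omega
  rcases hirr.isUnit_or_isUnit hfac with hu | hu
  · exact hdeg q₁ (by simp only [q₁]; compute_degree!) hu
  · exact hdeg q₂ (by simp only [q₂]; compute_degree!) hu

lemma PowerBasis.sq_ne_smul_gen {L : Type*} [CommRing L] [Nontrivial L] [Algebra K L]
    (pb : PowerBasis K L) {a : K} (h : minpoly K pb.gen = X ^ 2 - C a)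
    (ha : ∀ c : K, -4 * c ^ 4 ≠ a)
    {ε : K} (hε : ε ^ 2 = 1) (β : L) : β ^ 2 ≠ ε • pb.gen := by
  have hgen : pb.gen ^ 2 = algebraMap K L a := by
    simpa [h, sub_eq_zero] using minpoly.aeval K pb.gen
  have hli : ∀ c e : K, algebraMap K L c + algebraMap K L e * pb.gen = 0 → c = 0 ∧ e = 0 := by
    intro c e hce
    have hp : C e * X + C c = 0 := by
      by_contra hp
      have := minpoly.degree_le_of_ne_zero K pb.gen hp
        (by simpa [add_comm, Algebra.smul_def] using hce)
      rw [h, degree_X_pow_sub_C two_pos] at this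
      have := this.trans degree_linear_le
      norm_cast at this
    exact ⟨by simpa using congrArg (coeff · 0) hp, by simpa using congrArg (coeff · 1) hp⟩
  obtain ⟨f, hf, rfl⟩ := pb.exists_eq_aeval β
  rw [← pb.natDegree_minpoly, h, natDegree_X_pow_sub_C] at hf
  rw [eq_X_add_C_of_natDegree_le_one (by omega : f.natDegree ≤ 1)]
  set u := f.coeff 0
  set v := f.coeff 1
  intro hβ
  have h0 : algebraMap K L (u ^ 2 + a * v ^ 2) + algebraMap K L (2 * u * v - ε) * pb.gen = 0 := by
    simp only [map_add, map_mul, map_sub, map_pow, map_ofNat, Algebra.smul_def, aeval_C,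
      aeval_X] at hβ ⊢
    linear_combination hβ - (algebraMap K L v) ^ 2 * hgen
  obtain ⟨hc, hd⟩ := hli _ _ h0
  have hε0 : ε ≠ 0 := by rintro rfl; simp at hε
  have huv : 2 * u * v = ε := sub_eq_zero.mp hd
  have hv : v ≠ 0 := by rintro hv; rw [hv, mul_zero] at huv; exact hε0 huv.symm
  have h2 : (2 : K) ≠ 0 := by rintro h2; rw [h2, zero_mul, zero_mul] at huv; exact hε0 huv.symm
  -- `u = ε / 2v` and `u² = -av²` force `a = -4 (2v)⁻⁴`
  refine ha (2 * v)⁻¹ ?_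
  field_simp
  linear_combination -16 * v ^ 2 * hc + 4 * (congrArg (· ^ 2) huv).trans hε

theorem X_pow_two_pow_succ_sub_C_irreducible (k : ℕ) {a : K} (ha : ∀ b : K, b ^ 2 ≠ a)
    (ha4 : k ≠ 0 → ∀ c : K, -4 * c ^ 4 ≠ a) : Irreducible (X ^ 2 ^ (k + 1) - C a) := by
  induction k generalizing K a with
  | zero => simpa using X_pow_sub_C_irreducible_of_prime Nat.prime_two ha
  | succ k ih =>
    have ha4' := ha4 k.succ_ne_zero
    rw [pow_succ]
    refine X_pow_mul_sub_C_irreducible (X_pow_sub_C_irreducible_of_prime Nat.prime_two ha)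
      fun E _ _ x hx => ?_
    have hint : IsIntegral K x := minpoly.ne_zero_iff.mp (hx ▸ X_pow_sub_C_ne_zero two_pos a)
    set pb := adjoin.powerBasis hint
    have hpb : minpoly K pb.gen = X ^ 2 - C a := by rw [adjoin.powerBasis_gen, minpoly_gen, hx]
    rw [← adjoin.powerBasis_gen hint]
    -- `-4c⁴ = x` would make `-x = (2c²)²` a square
    refine ih (fun β hβ => pb.sq_ne_smul_gen hpb ha4' (one_pow 2) β (by rw [one_smul, hβ]))
      fun _ c hc => pb.sq_ne_smul_gen hpb ha4' (ε := -1) (by norm_num) (2 * c ^ 2) ?_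
    rw [neg_one_smul, ← hc]
    ring

lemma PowerBasis.norm_gen_eq_of_minpoly_eq_X_pow_sub_C {L : Type*} [CommRing L] [Algebra K L]
    (pb : PowerBasis K L) {d : ℕ} (hd : 0 < d) {a : K} (h : minpoly K pb.gen = X ^ d - C a) :
    Algebra.norm K pb.gen = -(-1) ^ d * a := by
  rw [Algebra.PowerBasis.norm_gen_eq_coeff_zero_minpoly, ← pb.natDegree_minpoly, h,
    natDegree_X_pow_sub_C]
  simp [coeff_X_pow, hd.ne]

theorem X_pow_mul_sub_C_irreducible_of_odd {d m : ℕ} (hm : Odd m) {a : K}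
    (hd : Irreducible (X ^ d - C a)) (ha : ∀ q : ℕ, q.Prime → q ∣ m → ∀ b : K, b ^ q ≠ a) :
    Irreducible (X ^ (m * d) - C a) := by
  have hd0 : 0 < d := by simpa [natDegree_X_pow_sub_C] using hd.natDegree_pos
  refine X_pow_mul_sub_C_irreducible hd fun E _ _ x hx => X_pow_sub_C_irreducible_of_odd hm ?_
  intro q hq hqm b hb
  have hint : IsIntegral K x := minpoly.ne_zero_iff.mp (hx ▸ X_pow_sub_C_ne_zero hd0 a)
  have hnorm := (adjoin.powerBasis hint).norm_gen_eq_of_minpoly_eq_X_pow_sub_C hd0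
    (by rw [adjoin.powerBasis_gen, minpoly_gen, hx])
  rw [adjoin.powerBasis_gen, ← hb, map_pow] at hnorm
  have hq_odd : Odd q := hm.of_dvd_nat hqm
  refine ha q hq hqm (-(-1) ^ d * Algebra.norm K b) ?_
  have hsq : ((-1 : K) ^ d) ^ 2 = 1 := by rw [← pow_mul, mul_comm, pow_mul]; simp
  rw [mul_pow, hnorm, hq_odd.neg_pow, ← pow_mul, mul_comm d, pow_mul, hq_odd.neg_one_pow]
  linear_combination a * hsq

end

/-- Irreducibility criterion for binomials over an arbitrary field
(Karpilovsky, Theorem 1.6): for a field `K`, `n ≥ 1` and `g ∈ K`, the binomial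
`x^n - g` is irreducible over `K` iff `g` is not a `p`-th power for each prime
`p ∣ n`, and moreover `g ∉ -4K^4` whenever `4 ∣ n`. -/
theorem binomial_irreducible_iff {K : Type*} [Field K] (n : ℕ) (hn : 1 ≤ n) (g : K) :
    Irreducible ((X : K[X]) ^ n - C g) ↔
      (∀ p : ℕ, p.Prime → p ∣ n → ¬ ∃ h : K, g = h ^ p) ∧
        (4 ∣ n → ¬ ∃ h : K, g = -4 * h ^ 4) := by
  constructor
  · intro H
    exact ⟨fun p hp hpn ⟨h, hh⟩ => pow_ne_of_irreducible_X_pow_sub_C H hpn hp.ne_one h hh.symm,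
      fun h4 ⟨h, hh⟩ => not_irreducible_X_pow_sub_C_neg_four_mul_pow_four h4 h (hh ▸ H)⟩
  · rintro ⟨hpow, hfour⟩
    obtain ⟨k, m, hm, rfl⟩ := Nat.exists_eq_two_pow_mul_odd (n := n) (by omega)
    rw [mul_comm]
    refine X_pow_mul_sub_C_irreducible_of_odd hm ?_
      fun q hq hqm b hb => hpow q hq (dvd_mul_of_dvd_right hqm _) ⟨b, hb.symm⟩
    cases k with
    | zero => simpa using irreducible_X_sub_C g
    | succ k =>
      refine X_pow_two_pow_succ_sub_C_irreducible k
        (fun b hb => hpow 2 Nat.prime_two (dvd_mul_of_dvd_left (dvd_pow_self 2 k.succ_ne_zero) m)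
          ⟨b, hb.symm⟩)
        fun hk c hc => hfour (dvd_mul_of_dvd_left ?_ m) ⟨c, hc.symm⟩
      simpa using Nat.pow_dvd_pow 2 (by omega : 2 ≤ k + 1)
end

section
/- Let F be a finite field and let n ≥ 2 be a natural number. If there exists some g ∈ F such that x^n − g is irreducible over F, then for every generator g' of the cyclic group F^×, the binomial x^n − g' is irreducible over F. -/
/-!
Write `g = g' ^ k`. If `α` is a root of an irreducible factor `f` of `X ^ n - C g'`, then `α ^ k`
is a root of the irreducible `X ^ n - C g`, so `n = [F(α ^ k) : F] ≤ [F(α) : F] = deg f ≤ n`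
and `f` is all of `X ^ n - C g'`.
-/

open Polynomial

section

variable {K : Type*} [Field K]

theorem le_natDegree_of_dvd_X_pow_sub_C_of_irreducible_zpow {n : ℕ} {b : K} {k : ℤ}
    (h : Irreducible (X ^ n - C (b ^ k))) {f : K[X]} (hf : Irreducible f)
    (hdvd : f ∣ X ^ n - C b) : n ≤ f.natDegree := by
  have : Fact (Irreducible f) := ⟨hf⟩
  let pb := AdjoinRoot.powerBasis hf.ne_zero
  have : Module.Finite K (AdjoinRoot f) := pb.finite
  have hroot : AdjoinRoot.root f ^ n = algebraMap K (AdjoinRoot f) b := by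
    have := AdjoinRoot.mk_eq_zero.mpr hdvd
    rwa [map_sub, map_pow, AdjoinRoot.mk_X, AdjoinRoot.mk_C, sub_eq_zero] at this
  have hminpoly : X ^ n - C (b ^ k) = minpoly K (AdjoinRoot.root f ^ k) := by
    refine minpoly.eq_of_irreducible_of_monic h ?_
      (monic_X_pow_sub_C _ (ne_zero_of_irreducible_X_pow_sub_C h))
    rw [map_sub, map_pow, aeval_X, aeval_C, map_zpow₀, ← hroot, ← zpow_natCast, ← zpow_natCast,
      ← zpow_mul, ← zpow_mul, mul_comm, sub_self]
  calc n = (minpoly K (AdjoinRoot.root f ^ k)).natDegree := by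
        rw [← hminpoly, natDegree_X_pow_sub_C]
    _ ≤ Module.finrank K (AdjoinRoot f) := minpoly.natDegree_le _
    _ = f.natDegree := by rw [pb.finrank, AdjoinRoot.powerBasis_dim]

theorem X_pow_sub_C_irreducible_of_irreducible_zpow {n : ℕ} {b : K} {k : ℤ}
    (h : Irreducible (X ^ n - C (b ^ k))) : Irreducible (X ^ n - C b) := by
  have hn : 0 < n := Nat.pos_of_ne_zero (ne_zero_of_irreducible_X_pow_sub_C h)
  have hne : X ^ n - C b ≠ 0 := X_pow_sub_C_ne_zero hn b
  have hnu : ¬IsUnit (X ^ n - C b) := by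
    rw [isUnit_iff_degree_eq_zero, degree_X_pow_sub_C hn]
    exact_mod_cast hn.ne'
  obtain ⟨f, hf, hdvd⟩ := WfDvdMonoid.exists_irreducible_factor hnu hne
  have hle : (X ^ n - C b).natDegree ≤ f.natDegree := by
    rw [natDegree_X_pow_sub_C]
    exact le_natDegree_of_dvd_X_pow_sub_C_of_irreducible_zpow h hf hdvd
  exact (associated_of_dvd_of_natDegree_le hdvd hne hle).irreducible hf

end

theorem binomial_irreducible_of_exists_for_generator_general {F : Type*} [Field F]
    (n : ℕ) (hn : 2 ≤ n) (h : ∃ g : F, Irreducible ((X : F[X]) ^ n - C g)) :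
    ∀ g' : Fˣ, (∀ x : Fˣ, x ∈ Subgroup.zpowers g') →
      Irreducible ((X : F[X]) ^ n - C (g' : F)) := by
  intro g' hg'
  obtain ⟨g, hirr⟩ := h
  have hg0 : g ≠ 0 := ne_zero_of_irreducible_X_pow_sub_C' (by omega) hirr
  obtain ⟨k, hk⟩ := Subgroup.mem_zpowers_iff.mp (hg' (Units.mk0 g hg0))
  refine X_pow_sub_C_irreducible_of_irreducible_zpow (k := k) ?_
  rwa [← Units.val_zpow_eq_zpow_val, hk, Units.val_mk0]

/-- If `F` is a finite field, `n ≥ 2`, and `x^n - g` is irreducible over `F`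
for some `g ∈ F`, then `x^n - g'` is irreducible over `F` for every generator
`g'` of the cyclic group `Fˣ`. -/
theorem binomial_irreducible_of_exists_for_generator {F : Type*} [Field F] [Fintype F]
    (n : ℕ) (hn : 2 ≤ n) (h : ∃ g : F, Irreducible ((X : F[X]) ^ n - C g)) :
    ∀ g' : Fˣ, (∀ x : Fˣ, x ∈ Subgroup.zpowers g') →
      Irreducible ((X : F[X]) ^ n - C (g' : F)) :=
  binomial_irreducible_of_exists_for_generator_general n hn h
end

section
/- Let K be a field such that for each natural number n ≥ 1, any two intermediate fields of the extension K ⊆ K̄ (a fixed algebraic closure of K) that have degree n over K are equal (i.e. K has a unique extension of each degree inside K̄). Suppose there exists g ∈ K such that for every natural number n ≥ 1 the binomial x^n − g is irreducible over K. For each n, let ⁿ√g ∈ K̄ denote a root of x^n − g. Then K̄ = K(ⁿ√g : n ∈ ℕ), i.e. the subfield of K̄ generated over K by the set {ⁿ√g : n ≥ 1} is all of K̄. -/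
/-!
Every `x ∈ K̄` generates a finite extension `K⟮x⟯`, of some degree `m ≥ 1`. Being irreducible,
`X ^ m - C g` is the minimal polynomial of `ᵐ√g`, so `K⟮ᵐ√g⟯` also has degree `m`; by uniqueness
of the degree-`m` extension, `x ∈ K⟮x⟯ = K⟮ᵐ√g⟯`.
-/

open Polynomial IntermediateField

section

variable {K L : Type*} [Field K] [Field L] [Algebra K L]

theorem minpoly_eq_X_pow_sub_C {n : ℕ} {g : K} (hirr : Irreducible ((X : K[X]) ^ n - C g))
    {x : L} (hx : x ^ n = algebraMap K L g) : minpoly K x = X ^ n - C g := by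
  refine (minpoly.eq_of_irreducible_of_monic hirr ?_
    (monic_X_pow_sub_C g (ne_zero_of_irreducible_X_pow_sub_C hirr))).symm
  simp [hx]

theorem finrank_adjoin_simple_eq_of_pow_eq {n : ℕ} {g : K}
    (hirr : Irreducible ((X : K[X]) ^ n - C g)) {x : L} (hx : x ^ n = algebraMap K L g) :
    Module.finrank K K⟮x⟯ = n := by
  have hint : IsIntegral K x :=
    ⟨X ^ n - C g, monic_X_pow_sub_C g (ne_zero_of_irreducible_X_pow_sub_C hirr), by simp [hx]⟩
  rw [adjoin.finrank hint, minpoly_eq_X_pow_sub_C hirr hx, natDegree_X_pow_sub_C]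

end

/-- If `K` is a field having a unique extension of each degree inside a fixed
algebraic closure `K̄`, and `g ∈ K` is such that `x^n - g` is irreducible over
`K` for every `n ≥ 1`, with `r n` denoting a root of `x^n - g` in `K̄`, then
`K̄` is generated over `K` by the roots `{ⁿ√g : n ≥ 1}`. -/
theorem algebraicClosure_eq_adjoin_roots {K : Type*} [Field K]
    (huniq : ∀ n : ℕ, 1 ≤ n → ∀ L₁ L₂ : IntermediateField K (AlgebraicClosure K),
      Module.finrank K L₁ = n → Module.finrank K L₂ = n → L₁ = L₂)
    (g : K) (hirr : ∀ n : ℕ, 1 ≤ n → Irreducible ((X : K[X]) ^ n - C g))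
    (r : ℕ → AlgebraicClosure K)
    (hr : ∀ n : ℕ, 1 ≤ n → r n ^ n = algebraMap K (AlgebraicClosure K) g) :
    IntermediateField.adjoin K {x : AlgebraicClosure K | ∃ n : ℕ, 1 ≤ n ∧ x = r n} = ⊤ := by
  refine eq_top_iff.mpr fun x _ => ?_
  set m := Module.finrank K K⟮x⟯
  have : FiniteDimensional K K⟮x⟯ :=
    adjoin.finiteDimensional (Algebra.IsIntegral.isIntegral x)
  have hm : 1 ≤ m := Module.finrank_pos
  have hxr : K⟮x⟯ = K⟮r m⟯ :=
    huniq m hm _ _ rfl (finrank_adjoin_simple_eq_of_pow_eq (hirr m hm) (hr m hm))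
  have hrm : r m ∈ adjoin K {x : AlgebraicClosure K | ∃ n : ℕ, 1 ≤ n ∧ x = r n} :=
    subset_adjoin K _ ⟨m, hm, rfl⟩
  exact adjoin_simple_le_iff.mpr hrm (hxr ▸ mem_adjoin_simple_self K x)
end

section
/- Let 𝒰 be a nonprincipal ultrafilter on ℕ, let (F_k)_{k∈ℕ} be a family of finite fields with |F_k| = q_k, and let n ≥ 2 be a natural number with prime divisors p₁, …, p_r. Then the set {k ∈ ℕ : there exists g ∈ F_k such that x^n − g is irreducible over F_k} belongs to 𝒰 if and only if the set {k ∈ ℕ : p₁, …, p_r all divide q_k − 1, and if 4 ∣ n then 4 ∣ q_k − 1} belongs to 𝒰. -/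
/-!
If a prime `l ∣ n` does not divide `q - 1`, every element of `𝔽_q` is an `l`-th power, so no
`x ^ n - g` is irreducible. If `4 ∣ n` but `q ≡ 3 (mod 4)`, then `-1` is a non-square, so every
non-square `g` has the form `-4 b ^ 4`, and `x ^ (4 m) + 4 b ^ 4` factors by Sophie Germain's
identity. Conversely, let `ζ` be a primitive `n (q - 1)`-th root of unity over `𝔽_q`. Then `ζ ^ n`
lies in `𝔽_q`, and if `ζ` has degree `d` then `n (q - 1) ∣ q ^ d - 1`; lifting the exponent turns
this into `n ∣ d`, so `x ^ n - ζ ^ n` is the minimal polynomial of `ζ`. At each level `k` the two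
conditions are therefore equivalent, and the two sets coincide.
-/

open Polynomial IntermediateField Finset

namespace padicValNat

theorem pow_sub_one {l q d : ℕ} [hl : Fact l.Prime] (hq : 1 < q) (hlq : l ∣ q - 1)
    (h2 : l = 2 → 4 ∣ q - 1) (hd : d ≠ 0) :
    padicValNat l (q ^ d - 1) = padicValNat l (q - 1) + padicValNat l d := by
  have hlq' : ¬l ∣ q := fun h ↦ hl.out.one_lt.ne'
    (Nat.dvd_one.mp (by simpa [Nat.sub_sub_self hq.le] using Nat.dvd_sub h hlq))
  rcases hl.out.eq_two_or_odd' with rfl | hodd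
  · have hqd : 1 < q ^ d := Nat.one_lt_pow hd hq
    have h4 := h2 rfl
    zify [hq.le] at h4 hlq'
    rw [← Nat.cast_inj (R := ℕ∞), Nat.cast_add, padicValNat_eq_emultiplicity (by omega),
      padicValNat_eq_emultiplicity (by omega), padicValNat_eq_emultiplicity hd,
      ← Int.natCast_emultiplicity, ← Int.natCast_emultiplicity, ← Int.natCast_emultiplicity]
    push_cast [hq.le, hqd.le]
    simpa using Int.two_pow_sub_pow' (y := 1) d h4 hlq'
  · simpa using padicValNat.pow_sub_pow (y := 1) hodd hq (by simpa using hlq) hlq' hd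

end padicValNat

namespace Nat

theorem even_of_two_mul_sub_one_dvd_pow_sub_one {q d : ℕ} (hq : 1 < q) (hodd : Odd q)
    (h : 2 * (q - 1) ∣ q ^ d - 1) : Even d := by
  have hqd : 1 ≤ q ^ d := Nat.one_le_pow _ _ (by omega)
  zify [hq.le, hqd] at h
  by_contra hd
  have hS : (2 : ℤ) ∣ ∑ i ∈ range d, (q : ℤ) ^ i * 1 ^ (d - 1 - i) := by
    rwa [← mul_dvd_mul_iff_right (by omega : (q : ℤ) - 1 ≠ 0), geom_sum₂_mul, one_pow]
  refine not_dvd_geom_sum₂ Int.prime_two ?_ ?_ ?_ hS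
  · exact ((Int.odd_coe_nat q).mpr hodd |>.sub_odd odd_one).two_dvd
  · exact_mod_cast hodd.not_two_dvd_nat
  · exact_mod_cast (by simpa [even_iff_two_dvd] using hd : ¬2 ∣ d)

theorem dvd_of_mul_sub_one_dvd_pow_sub_one {q n d : ℕ} (hq : 1 < q)
    (hprime : ∀ l : ℕ, l.Prime → l ∣ n → l ∣ q - 1) (h4 : 4 ∣ n → 4 ∣ q - 1)
    (h : n * (q - 1) ∣ q ^ d - 1) : n ∣ d := by
  rcases eq_or_ne d 0 with rfl | hd
  · exact dvd_zero n
  have hqd : q ^ d - 1 ≠ 0 := Nat.sub_ne_zero_of_lt (Nat.one_lt_pow hd hq)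
  have hn : n ≠ 0 := by rintro rfl; exact hqd (zero_dvd_iff.mp (by simpa using h))
  rw [← Nat.factorization_prime_le_iff_dvd hn hd]
  intro l hl
  have := Fact.mk hl
  by_cases hln : l ∣ n
  swap
  · simp [Nat.factorization_eq_zero_of_not_dvd hln]
  have hlq := hprime l hl hln
  rw [Nat.factorization_def n hl, Nat.factorization_def d hl]
  have hle : padicValNat l n + padicValNat l (q - 1) ≤ padicValNat l (q ^ d - 1) := by
    rw [← padicValNat.mul hn (by omega), ← padicValNat_dvd_iff_le hqd]
    exact pow_padicValNat_dvd.trans h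
  by_cases h2 : l = 2 → 4 ∣ q - 1
  · rw [padicValNat.pow_sub_one hq hlq h2 hd] at hle
    omega
  -- Without `4 ∣ q - 1` lifting the exponent fails at `2`, but then `2 ∣ n` only to the first power.
  obtain ⟨rfl, h4q⟩ := Classical.not_imp.mp h2
  have hn1 : padicValNat 2 n ≤ 1 := by
    by_contra! hv
    exact h4q (h4 ((pow_dvd_pow 2 hv).trans pow_padicValNat_dvd))
  have hd1 : 1 ≤ padicValNat 2 d := by
    refine one_le_padicValNat_of_dvd hd (even_iff_two_dvd.mp ?_)
    refine even_of_two_mul_sub_one_dvd_pow_sub_one hq ?_ ((mul_dvd_mul_right hln _).trans h)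
    obtain ⟨c, hc⟩ := hlq
    exact ⟨c, by omega⟩
  omega

end Nat

theorem Polynomial.not_irreducible_X_pow_sub_C_neg_four_mul_pow_four {R : Type*} [CommRing R]
    [IsDomain R] (b : R) {m : ℕ} (hm : m ≠ 0) : ¬Irreducible (X ^ (4 * m) - C (-4 * b ^ 4)) := by
  have hdeg : ∀ s : R, (X ^ (2 * m) + C s * X ^ m + C (2 * b ^ 2)).natDegree = 2 * m := by
    intro s
    compute_degree!
    · rw [if_neg (by omega), if_neg (by omega)]; simp
    all_goals omega
  intro hirr
  have hfactor : (X ^ (4 * m) - C (-4 * b ^ 4) : R[X]) =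
      (X ^ (2 * m) + C (-2 * b) * X ^ m + C (2 * b ^ 2)) *
        (X ^ (2 * m) + C (2 * b) * X ^ m + C (2 * b ^ 2)) := by
    simp only [map_mul, map_neg, map_pow, map_ofNat, pow_mul']
    ring
  rcases hirr.isUnit_or_isUnit hfactor with hu | hu <;>
    exact not_isUnit_of_natDegree_pos _ (by rw [hdeg]; omega) hu

namespace FiniteField

variable {K : Type*} [Field K] [Fintype K]

theorem exists_pow_eq_of_coprime {l : ℕ} (hl : l ≠ 0) (h : (Fintype.card K - 1).Coprime l)
    (g : K) : ∃ b : K, b ^ l = g := by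
  rcases eq_or_ne g 0 with rfl | hg
  · exact ⟨0, zero_pow hl⟩
  have hcard : (Nat.card Kˣ).Coprime l := by
    rwa [Nat.card_units, Nat.card_eq_fintype_card]
  obtain ⟨u, hu⟩ := hcard.pow_left_bijective.surjective (Units.mk0 g hg)
  exact ⟨u, by simpa using congrArg Units.val hu⟩

theorem isSquare_mul_of_not_isSquare {a b : K} (ha : ¬IsSquare a) (hb : ¬IsSquare b) :
    IsSquare (a * b) := by
  have ha0 : a ≠ 0 := by rintro rfl; exact ha IsSquare.zero
  have hb0 : b ≠ 0 := by rintro rfl; exact hb IsSquare.zero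
  classical
  rw [← quadraticChar_one_iff_isSquare (mul_ne_zero ha0 hb0), map_mul,
    quadraticChar_neg_one_iff_not_isSquare.mpr ha, quadraticChar_neg_one_iff_not_isSquare.mpr hb]
  norm_num

theorem exists_eq_neg_four_mul_pow_four (h : ¬IsSquare (-1 : K)) {g : K} (hg : ¬IsSquare g) :
    ∃ b : K, g = -4 * b ^ 4 := by
  have h2 : (2 : K) ≠ 0 := fun h2 ↦ h ⟨1, by linear_combination -h2⟩
  obtain ⟨c, hc⟩ := isSquare_mul_of_not_isSquare h hg
  obtain ⟨b, hb⟩ : ∃ b : K, (b * b) ^ 2 = (c / 2) ^ 2 := by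
    by_cases hsq : IsSquare (c / 2)
    · obtain ⟨b, hb⟩ := hsq
      exact ⟨b, by rw [hb]⟩
    · obtain ⟨b, hb⟩ := isSquare_mul_of_not_isSquare h hsq
      exact ⟨b, by rw [← hb]; ring⟩
  refine ⟨b, ?_⟩
  field_simp at hb
  linear_combination -hc + hb

theorem natCast_card_sub_one : ((Fintype.card K - 1 : ℕ) : K) = -1 := by
  rw [Nat.cast_sub Fintype.card_pos, cast_card_eq_zero, Nat.cast_one, zero_sub]

theorem pow_card_pow_natDegree_minpoly {L : Type*} [Field L] [Algebra K L] {x : L}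
    (hx : IsIntegral K x) : x ^ Fintype.card K ^ (minpoly K x).natDegree = x := by
  have : FiniteDimensional K K⟮x⟯ := IntermediateField.adjoin.finiteDimensional hx
  have : Finite K⟮x⟯ := Module.finite_of_finite K
  have : Fintype K⟮x⟯ := Fintype.ofFinite _
  have hcard : Fintype.card K⟮x⟯ = Fintype.card K ^ (minpoly K x).natDegree := by
    rw [Module.card_eq_pow_finrank (K := K), IntermediateField.adjoin.finrank hx]
  simpa [hcard] using congrArg (algebraMap K⟮x⟯ L) (pow_card (AdjoinSimple.gen K x))

theorem exists_algebraMap_eq_of_pow_card_sub_one_eq_one {L : Type*} [Field L] [Algebra K L]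
    {y : L} (hy : y ^ (Fintype.card K - 1) = 1) : ∃ g : K, algebraMap K L g = y := by
  obtain ⟨ω, hω⟩ := IsCyclic.exists_ofOrder_eq_natCard (α := Kˣ)
  rw [Nat.card_units, Nat.card_eq_fintype_card] at hω
  have hprim : IsPrimitiveRoot (algebraMap K L ω) (Fintype.card K - 1) :=
    (IsPrimitiveRoot.coe_units_iff.mpr (hω ▸ IsPrimitiveRoot.orderOf ω)).map_of_injective
      (algebraMap K L).injective
  have : NeZero (Fintype.card K - 1) := ⟨by have := Fintype.one_lt_card (α := K); omega⟩
  obtain ⟨i, -, hi⟩ := hprim.eq_pow_of_pow_eq_one hy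
  exact ⟨ω ^ i, by rw [map_pow, hi]⟩

theorem natCast_ne_zero_of_forall_prime_dvd_card_sub_one {n : ℕ}
    (hprime : ∀ l : ℕ, l.Prime → l ∣ n → l ∣ Fintype.card K - 1) : (n : K) ≠ 0 := by
  intro h0
  have hp := CharP.char_is_prime K (ringChar K)
  have := (CharP.cast_eq_zero_iff K (ringChar K) _).mpr
    (hprime _ hp ((CharP.cast_eq_zero_iff K (ringChar K) n).mp h0))
  rw [natCast_card_sub_one] at this
  exact one_ne_zero (neg_eq_zero.mp this)

end FiniteField

section

variable {K : Type*} [Field K] [Fintype K] {n : ℕ}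

theorem dvd_card_sub_one_of_irreducible_X_pow_sub_C {g : K} (h : Irreducible (X ^ n - C g))
    {l : ℕ} (hl : l.Prime) (hln : l ∣ n) : l ∣ Fintype.card K - 1 := by
  by_contra hlq
  obtain ⟨b, hb⟩ := FiniteField.exists_pow_eq_of_coprime hl.ne_zero
    (hl.coprime_iff_not_dvd.mpr hlq).symm g
  exact pow_ne_of_irreducible_X_pow_sub_C h hln hl.ne_one b hb

theorem four_dvd_card_sub_one_of_irreducible_X_pow_sub_C {g : K} (h : Irreducible (X ^ n - C g))
    (hn : 4 ∣ n) : 4 ∣ Fintype.card K - 1 := by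
  have h2 : 2 ∣ Fintype.card K - 1 :=
    dvd_card_sub_one_of_irreducible_X_pow_sub_C h Nat.prime_two ((by norm_num : 2 ∣ 4).trans hn)
  by_contra h4
  have hneg : ¬IsSquare (-1 : K) := by
    rw [FiniteField.isSquare_neg_one_iff]
    omega
  have hg : ¬IsSquare g := fun ⟨c, hc⟩ ↦ pow_ne_of_irreducible_X_pow_sub_C h
    ((by norm_num : 2 ∣ 4).trans hn) (by norm_num) c (by rw [hc, sq])
  obtain ⟨b, rfl⟩ := FiniteField.exists_eq_neg_four_mul_pow_four hneg hg
  obtain ⟨m, rfl⟩ := hn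
  have hm : m ≠ 0 := by
    rintro rfl
    rw [mul_zero, pow_zero, ← C_1, ← C_sub] at h
    exact not_irreducible_C _ h
  exact not_irreducible_X_pow_sub_C_neg_four_mul_pow_four b hm h

theorem exists_irreducible_X_pow_sub_C (hn : n ≠ 0)
    (hprime : ∀ l : ℕ, l.Prime → l ∣ n → l ∣ Fintype.card K - 1)
    (h4 : 4 ∣ n → 4 ∣ Fintype.card K - 1) : ∃ g : K, Irreducible (X ^ n - C g) := by
  set q := Fintype.card K
  have : NeZero ((n * (q - 1) : ℕ) : K) := ⟨by
    rw [Nat.cast_mul, FiniteField.natCast_card_sub_one, mul_neg_one, neg_ne_zero]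
    exact FiniteField.natCast_ne_zero_of_forall_prime_dvd_card_sub_one hprime⟩
  obtain ⟨ζ, hζ⟩ := HasEnoughRootsOfUnity.exists_primitiveRoot (AlgebraicClosure K) (n * (q - 1))
  obtain ⟨g, hg⟩ := FiniteField.exists_algebraMap_eq_of_pow_card_sub_one_eq_one
    (by rw [← pow_mul, hζ.pow_eq_one] : (ζ ^ n) ^ (q - 1) = 1)
  have hroot : aeval ζ (X ^ n - C g) = 0 := by simp [hg]
  have hint : IsIntegral K ζ := ⟨_, monic_X_pow_sub_C g hn, hroot⟩
  have hdvd : minpoly K ζ ∣ X ^ n - C g := minpoly.dvd K ζ hroot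
  have hnd : n ∣ (minpoly K ζ).natDegree := by
    refine Nat.dvd_of_mul_sub_one_dvd_pow_sub_one Fintype.one_lt_card hprime h4
      (hζ.dvd_of_pow_eq_one _ ?_)
    refine mul_left_cancel₀ (hζ.ne_zero (NeZero.of_neZero_natCast K).out) ?_
    rw [mul_pow_sub_one (pow_ne_zero _ Fintype.card_ne_zero),
      FiniteField.pow_card_pow_natDegree_minpoly hint, mul_one]
  refine ⟨g, ?_⟩
  rw [eq_of_monic_of_dvd_of_natDegree_le (minpoly.monic hint) (monic_X_pow_sub_C g hn) hdvd
    (by rw [natDegree_X_pow_sub_C]; exact Nat.le_of_dvd (minpoly.natDegree_pos hint) hnd)]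
  exact minpoly.irreducible hint

theorem exists_irreducible_X_pow_sub_C_iff (hn : n ≠ 0) :
    (∃ g : K, Irreducible (X ^ n - C g)) ↔
      (∀ l : ℕ, l.Prime → l ∣ n → l ∣ Fintype.card K - 1) ∧
        (4 ∣ n → 4 ∣ Fintype.card K - 1) :=
  ⟨fun ⟨_, h⟩ ↦ ⟨fun _ hl hln ↦ dvd_card_sub_one_of_irreducible_X_pow_sub_C h hl hln,
      four_dvd_card_sub_one_of_irreducible_X_pow_sub_C h⟩,
    fun ⟨hprime, h4⟩ ↦ exists_irreducible_X_pow_sub_C hn hprime h4⟩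

end

theorem ultrafilter_binomial_irreducible_iff_general
    (𝒰 : Ultrafilter ℕ)
    (F : ℕ → Type*) [∀ k, Field (F k)] [∀ k, Fintype (F k)]
    (q : ℕ → ℕ) (hq : ∀ k, Fintype.card (F k) = q k)
    (n : ℕ) (hn : 2 ≤ n)
    (r : ℕ) (p : Fin r → ℕ)
    (hp : ∀ m : ℕ, (m.Prime ∧ m ∣ n) ↔ m ∈ Set.range p) :
    {k : ℕ | ∃ g : F k, Irreducible ((X : (F k)[X]) ^ n - C g)} ∈ 𝒰 ↔
      {k : ℕ | (∀ i : Fin r, p i ∣ q k - 1) ∧ (4 ∣ n → 4 ∣ q k - 1)} ∈ 𝒰 := by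
  suffices hset : {k : ℕ | ∃ g : F k, Irreducible ((X : (F k)[X]) ^ n - C g)} =
      {k : ℕ | (∀ i : Fin r, p i ∣ q k - 1) ∧ (4 ∣ n → 4 ∣ q k - 1)} by
    rw [hset]
  ext k
  rw [Set.mem_ofPred_eq, Set.mem_ofPred_eq, exists_irreducible_X_pow_sub_C_iff (by omega), hq k]
  refine and_congr_left' ⟨fun h i ↦ ?_, fun h l hl hln ↦ ?_⟩
  · obtain ⟨hprime, hdvd⟩ := (hp (p i)).mpr ⟨i, rfl⟩
    exact h _ hprime hdvd
  · obtain ⟨i, rfl⟩ := (hp l).mp ⟨hl, hln⟩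
    exact h i

/-- The finite-level content of (2) ⇔ (3) in the criterion for irreducibility
of binomials over an ultraproduct of finite fields: given a nonprincipal
ultrafilter `𝒰` on `ℕ`, finite fields `F k` with `q k` elements, and `n ≥ 2`
whose prime divisors are `p 0, …, p (r-1)`, the set of `k` for which some
binomial `x^n - g` is irreducible over `F k` lies in `𝒰` iff the set of `k`
for which all `p i` divide `q k - 1` (and `4 ∣ q k - 1` whenever `4 ∣ n`)
lies in `𝒰`. -/
theorem ultrafilter_binomial_irreducible_iff
    (𝒰 : Ultrafilter ℕ) (h𝒰 : ∀ s : Set ℕ, s.Finite → s ∉ 𝒰)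
    (F : ℕ → Type*) [∀ k, Field (F k)] [∀ k, Fintype (F k)]
    (q : ℕ → ℕ) (hq : ∀ k, Fintype.card (F k) = q k)
    (n : ℕ) (hn : 2 ≤ n)
    (r : ℕ) (p : Fin r → ℕ)
    (hp : ∀ m : ℕ, (m.Prime ∧ m ∣ n) ↔ m ∈ Set.range p) :
    {k : ℕ | ∃ g : F k, Irreducible ((X : (F k)[X]) ^ n - C g)} ∈ 𝒰 ↔
      {k : ℕ | (∀ i : Fin r, p i ∣ q k - 1) ∧ (4 ∣ n → 4 ∣ q k - 1)} ∈ 𝒰 :=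
  ultrafilter_binomial_irreducible_iff_general 𝒰 F q hq n hn r p hp
end
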